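/- Under the hypotheses of the quaternionic Riccati setup (w twice differentiable and nonzero, a = dw/dt, b = d²w/dt², 𝔮_a = [α_a,χ_a], 𝔮_b = [α_b,χ_b] defined as above), the Riccati relation holds: d𝔮_a/dt + 𝔮_a⊛𝔮_a = 𝔮_b. -/

import Mathlib

/-!
Identify `[α, χ]` with the quaternion `α + χ₀ i + χ₁ j + χ₂ k`, so that `qmul` becomes quaternion
multiplication. Writing `W = [0,w]`, `A = [0,a]`, `B = [0,b]`, one computes `𝔮_a = A W⁻¹` and
`𝔮_b = B W⁻¹`. Since `W' = A` and `A' = B`, differentiating `A W⁻¹` gives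
`B W⁻¹ - A W⁻¹ A W⁻¹ = 𝔮_b - 𝔮_a ⊛ 𝔮_a`.
-/

open Matrix

/-- The quaternion product in scalar-vector form. -/
noncomputable def qmul (a b : ℝ × (Fin 3 → ℝ)) : ℝ × (Fin 3 → ℝ) :=
  (a.1 * b.1 - a.2 ⬝ᵥ b.2, a.1 • b.2 + b.1 • a.2 + a.2 ⨯₃ b.2)

/-- The Euclidean norm of a vector in `ℝ³`. -/
noncomputable def norm3 (v : Fin 3 → ℝ) : ℝ := Real.sqrt (v ⬝ᵥ v)

open Quaternion

section DivisionRing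

variable {𝕜 R : Type*} [NontriviallyNormedField 𝕜] [NormedDivisionRing R] [NormedAlgebra 𝕜 R]
  {W A : 𝕜 → R} {W' A' : R} {t : 𝕜}

theorem HasDerivAt.inv' (hW : HasDerivAt W W' t) (hWt : W t ≠ 0) :
    HasDerivAt (fun s => (W s)⁻¹) (-((W t)⁻¹ * W' * (W t)⁻¹)) t :=
  (hasFDerivAt_inv' hWt).comp_hasDerivAt t hW

theorem HasDerivAt.mul_inv' (hA : HasDerivAt A A' t) (hW : HasDerivAt W W' t) (hWt : W t ≠ 0) :
    HasDerivAt (fun s => A s * (W s)⁻¹)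
      (A' * (W t)⁻¹ - A t * (W t)⁻¹ * W' * (W t)⁻¹) t := by
  convert hA.fun_mul (hW.inv' hWt) using 1
  noncomm_ring

theorem HasDerivAt.riccati_mul_inv {B : R} (hW : HasDerivAt W (A t) t) (hA : HasDerivAt A B t)
    (hWt : W t ≠ 0) :
    HasDerivAt (fun s => A s * (W s)⁻¹) (B * (W t)⁻¹ - A t * (W t)⁻¹ * (A t * (W t)⁻¹)) t := by
  simpa only [mul_assoc] using hA.mul_inv' hW hWt

end DivisionRing

noncomputable def toQuaternion : (ℝ × (Fin 3 → ℝ)) ≃L[ℝ] ℍ[ℝ] :=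
  LinearEquiv.toContinuousLinearEquiv
    { toFun := fun p => ⟨p.1, p.2 0, p.2 1, p.2 2⟩
      invFun := fun q => (q.re, ![q.imI, q.imJ, q.imK])
      map_add' := fun p q => by ext <;> rfl
      map_smul' := fun c p => by ext <;> rfl
      left_inv := fun p => by
        ext i
        · rfl
        · fin_cases i <;> rfl
      right_inv := fun q => by ext <;> rfl }

@[simp] theorem toQuaternion_re (p : ℝ × (Fin 3 → ℝ)) : (toQuaternion p).re = p.1 := rfl
@[simp] theorem toQuaternion_imI (p : ℝ × (Fin 3 → ℝ)) : (toQuaternion p).imI = p.2 0 := rfl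
@[simp] theorem toQuaternion_imJ (p : ℝ × (Fin 3 → ℝ)) : (toQuaternion p).imJ = p.2 1 := rfl
@[simp] theorem toQuaternion_imK (p : ℝ × (Fin 3 → ℝ)) : (toQuaternion p).imK = p.2 2 := rfl

theorem toQuaternion_qmul (p q : ℝ × (Fin 3 → ℝ)) :
    toQuaternion (qmul p q) = toQuaternion p * toQuaternion q := by
  ext <;> simp [qmul, cross_apply, dotProduct, Fin.sum_univ_three, vecHead, vecTail] <;> ring

theorem normSq_toQuaternion_pure (w : Fin 3 → ℝ) : normSq (toQuaternion (0, w)) = w ⬝ᵥ w := by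
  simp [normSq_def', dotProduct, Fin.sum_univ_three, sq]

theorem toQuaternion_pure_mul_star_pure (v w : Fin 3 → ℝ) :
    toQuaternion (0, v) * star (toQuaternion (0, w)) = toQuaternion (w ⬝ᵥ v, w ⨯₃ v) := by
  ext <;> simp [cross_apply, dotProduct, Fin.sum_univ_three] <;> ring

theorem toQuaternion_alignment (w v : Fin 3 → ℝ) :
    toQuaternion (((norm3 w)⁻¹ • w) ⬝ᵥ v / norm3 w, (norm3 w)⁻¹ • (((norm3 w)⁻¹ • w) ⨯₃ v)) =
      toQuaternion (0, v) * (toQuaternion (0, w))⁻¹ := by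
  have hsq : (norm3 w)⁻¹ * (norm3 w)⁻¹ = (w ⬝ᵥ w)⁻¹ := by
    rw [← mul_inv, norm3, Real.mul_self_sqrt (by simpa using dotProduct_self_star_nonneg w)]
  rw [Quaternion.inv_def, normSq_toQuaternion_pure, mul_smul_comm, toQuaternion_pure_mul_star_pure,
    ← toQuaternion.map_smul, Prod.smul_mk]
  congr 2
  · rw [smul_dotProduct, smul_eq_mul, smul_eq_mul, div_eq_mul_inv, mul_right_comm, hsq]
  · rw [LinearMap.map_smul₂, smul_smul, hsq]

theorem HasDerivAt.toQuaternion_pure {c : ℝ → Fin 3 → ℝ} {c' : Fin 3 → ℝ} {t : ℝ}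
    (h : HasDerivAt c c' t) :
    HasDerivAt (fun s => toQuaternion (0, c s)) (toQuaternion (0, c')) t :=
  toQuaternion.hasFDerivAt.comp_hasDerivAt t ((hasDerivAt_const t 0).prodMk h)

section Prod

variable {𝕜 E F : Type*} [NontriviallyNormedField 𝕜] [NormedAddCommGroup E] [NormedSpace 𝕜 E]
  [NormedAddCommGroup F] [NormedSpace 𝕜 F] {f : 𝕜 → E × F} {f' : E × F} {x : 𝕜}

theorem HasDerivAt.fst (h : HasDerivAt f f' x) : HasDerivAt (fun s => (f s).1) f'.1 x := by
  simpa using h.hasFDerivAt.fst.hasDerivAt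

theorem HasDerivAt.snd (h : HasDerivAt f f' x) : HasDerivAt (fun s => (f s).2) f'.2 x := by
  simpa using h.hasFDerivAt.snd.hasDerivAt

end Prod

/-- For a twice differentiable nonvanishing curve `w` with `dw/dt = a`, `d²w/dt² = b`,
and quaternions `𝔮_a = [α_a,χ_a]`, `𝔮_b = [α_b,χ_b]` built from the alignment
decompositions of `a` and `b`, the Riccati relation `d𝔮_a/dt + 𝔮_a⊛𝔮_a = 𝔮_b` holds. -/
theorem riccati_relation (w a b : ℝ → Fin 3 → ℝ)
    (hne : ∀ t, w t ≠ 0)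
    (ha : ∀ t, HasDerivAt w (a t) t)
    (hb : ∀ t, HasDerivAt a (b t) t) :
    let what : ℝ → Fin 3 → ℝ := fun t => (norm3 (w t))⁻¹ • w t
    let αa : ℝ → ℝ := fun t => (what t ⬝ᵥ a t) / norm3 (w t)
    let χa : ℝ → Fin 3 → ℝ := fun t => (norm3 (w t))⁻¹ • (what t ⨯₃ a t)
    let αb : ℝ → ℝ := fun t => (what t ⬝ᵥ b t) / norm3 (w t)
    let χb : ℝ → Fin 3 → ℝ := fun t => (norm3 (w t))⁻¹ • (what t ⨯₃ b t)
    ∀ t : ℝ,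
      (deriv αa t + (qmul (αa t, χa t) (αa t, χa t)).1,
       deriv χa t + (qmul (αa t, χa t) (αa t, χa t)).2) = (αb t, χb t) := by
  intro what αa χa αb χb t
  set Q : ℝ → ℍ[ℝ] := fun s => toQuaternion (0, a s) * (toQuaternion (0, w s))⁻¹
  have hQa : ∀ s, toQuaternion (αa s, χa s) = Q s := fun s => toQuaternion_alignment (w s) (a s)
  have hQ : HasDerivAt Q (toQuaternion (αb t, χb t) - Q t * Q t) t := by
    rw [toQuaternion_alignment (w t) (b t)]
    exact (ha t).toQuaternion_pure.riccati_mul_inv (hb t).toQuaternion_pure (by simpa using hne t)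
  have hpair : HasDerivAt (fun s => (αa s, χa s))
      (toQuaternion.symm (toQuaternion (αb t, χb t) - Q t * Q t)) t := by
    rw [show (fun s => (αa s, χa s)) = toQuaternion.symm ∘ Q from
      funext fun s => toQuaternion.eq_symm_apply.mpr (hQa s)]
    exact toQuaternion.symm.hasFDerivAt.comp_hasDerivAt t hQ
  have hderiv : (deriv αa t, deriv χa t) =
      toQuaternion.symm (toQuaternion (αb t, χb t) - Q t * Q t) :=
    Prod.ext hpair.fst.deriv hpair.snd.deriv
  apply toQuaternion.injective
  change toQuaternion ((deriv αa t, deriv χa t) + qmul (αa t, χa t) (αa t, χa t)) = _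
  rw [map_add, toQuaternion_qmul, hderiv, hQa,
    toQuaternion.apply_symm_apply, sub_add_cancel]
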